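/- Let A be a probabilistic automaton with finite state space Q, let β be a probability distribution on Q, and let w be a lasso shape word. Then the process (δ(β, w[1..n]))_{n∈ℕ} induced by w and β on Q is simple. -/

import Mathlib

open Filter Topology MeasureTheory

namespace PAut

/-- A finite probabilistic table: row-stochastic matrices indexed by letters,
together with an initial distribution. -/
structure FPT (Q : Type*) (A : Type*) [Fintype Q] where
  M : A → Q → Q → ℝ
  M_nonneg : ∀ a q q', 0 ≤ M a q q'
  M_row : ∀ a q, ∑ q', M a q q' = 1
  init : Q → ℝ
  init_nonneg : ∀ q, 0 ≤ init q
  init_sum : ∑ q, init q = 1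

variable {Q A : Type*} [Fintype Q] [DecidableEq Q]

/-- `β` is a probability distribution on `Q`. -/
def IsDist (β : Q → ℝ) : Prop := (∀ q, 0 ≤ β q) ∧ ∑ q, β q = 1

/-- The matrix `M_ρ` of a finite word `ρ`. -/
def Mword (T : FPT Q A) : List A → Q → Q → ℝ
  | [], q, q' => if q = q' then 1 else 0
  | a :: ρ, q, q' => ∑ x, T.M a q x * Mword T ρ x q'

/-- `δ(β,ρ)`: the distribution after reading `ρ` from initial distribution `β`. -/
def delta (T : FPT Q A) (β : Q → ℝ) (ρ : List A) : Q → ℝ :=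
  fun q => ∑ q', β q' * Mword T ρ q' q

/-- Support of a distribution. -/
def supp (β : Q → ℝ) : Set Q := {q | β q ≠ 0}

/-- `H·ρ` : states reachable with positive probability from `H` reading `ρ`. -/
def act (T : FPT Q A) (H : Set Q) (ρ : List A) : Set Q :=
  {q | ∃ q' ∈ H, 0 < Mword T ρ q' q}

/-- One step of the homogeneous chain induced on `S` by the word `ρ`. -/
def stepRel (T : FPT Q A) (S : Set Q) (ρ : List A) (x y : Q) : Prop :=
  x ∈ S ∧ y ∈ S ∧ 0 < Mword T ρ x y

/-- `S·ρ^#` : the recurrent states of the homogeneous chain induced on `S` by `ρ`. -/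
def hashSet (T : FPT Q A) (S : Set Q) (ρ : List A) : Set Q :=
  {s | s ∈ S ∧ ∀ t, Relation.ReflTransGen (stepRel T S ρ) s t →
        Relation.ReflTransGen (stepRel T S ρ) t s}

/-- `(S,ρ)` is a `#`-reduction. -/
def IsHashReduction (T : FPT Q A) (S : Set Q) (ρ : List A) : Prop :=
  act T S ρ = S ∧ hashSet T S ρ ≠ S

/-- The execution tree `(β,ρ)` (finite word) is chain recurrent. -/
def ChainRecFin (T : FPT Q A) (β : Q → ℝ) (ρ : List A) : Prop :=
  ∀ ρ₁ ρ₂ : List A, (ρ₁ ++ ρ₂) <+: ρ →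
    ¬ IsHashReduction T (supp (delta T β ρ₁)) ρ₂

/-- `l` is a prefix of the infinite word `w`. -/
def PrefixOf (l : List A) (w : ℕ → A) : Prop :=
  ∀ (i : ℕ) (h : i < l.length), l.get ⟨i, h⟩ = w i

/-- The execution tree `(β,w)` (infinite word) is chain recurrent. -/
def ChainRecInf (T : FPT Q A) (β : Q → ℝ) (w : ℕ → A) : Prop :=
  ∀ ρ₁ ρ₂ : List A, PrefixOf (ρ₁ ++ ρ₂) w →
    ¬ IsHashReduction T (supp (delta T β ρ₁)) ρ₂

/-- `w[1..n]` : the prefix of length `n` of the infinite word `w`. -/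
def wordPrefix (w : ℕ → A) (n : ℕ) : List A := (List.range n).map w

/-- `w[n₁+1..n₂]` : the letters of `w` read between time `n₁` and time `n₂`. -/
def wordSegment (w : ℕ → A) (n₁ n₂ : ℕ) : List A :=
  (List.range (n₂ - n₁)).map fun j => w (n₁ + j)

/-- `μ_n^w = δ(α, w[1..n])` : the induced process on `Q`. -/
def muDist (T : FPT Q A) (w : ℕ → A) (n : ℕ) : Q → ℝ :=
  delta T T.init (wordPrefix w n)

/-- A process `μ` on `Q` is simple: a partition `(Aₙ, Aₙᶜ)` of `Q`,
with mass `> λ` on each point of `Aₙ` and total mass of `Aₙᶜ` going to `0`. -/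
def SimpleProcess (μ : ℕ → Q → ℝ) : Prop :=
  ∃ lam : ℝ, 0 < lam ∧ ∃ Aset : ℕ → Finset Q,
    (∀ n, ∀ q ∈ Aset n, lam < μ n q) ∧
    Tendsto (fun n => ∑ q ∈ (Aset n)ᶜ, μ n q) atTop (𝓝 0)

open Classical in
/-- `β(F)` : the mass a distribution gives to a set of states. -/
noncomputable def massOn (β : Q → ℝ) (F : Set Q) : ℝ :=
  ∑ q : Q, if q ∈ F then β q else 0

open Classical in
/-- The uniform distribution on a set of states. -/
noncomputable def unif (D : Set Q) : Q → ℝ :=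
  fun q => if q ∈ D then 1 / (Nat.card D : ℝ) else 0

/-- The Dirac distribution at a state. -/
def dirac (q : Q) : Q → ℝ := fun q' => if q' = q then 1 else 0

/-- `ε(A)` : the smallest nonzero transition probability of the automaton. -/
noncomputable def minProb (T : FPT Q A) : ℝ :=
  sInf {x : ℝ | 0 < x ∧ ∃ a q q', T.M a q q' = x}

/-! ### Linked graphs -/

/-- Left endpoints of a bipartite graph. -/
def lgA (G : Set (Q × Q)) : Set Q := Prod.fst '' G

/-- Right endpoints of a bipartite graph. -/
def lgB (G : Set (Q × Q)) : Set Q := Prod.snd '' G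

/-- The linking condition for a sequence of bipartite graphs. -/
def IsLinked (l : List (Set (Q × Q))) : Prop :=
  List.Chain' (fun G H => lgB G = lgA H) l

/-- Origin of a linked graph. -/
def lgOrg : List (Set (Q × Q)) → Set Q
  | [] => ∅
  | G :: _ => lgA G

/-- Destination of a linked graph. -/
def lgDest : List (Set (Q × Q)) → Set Q
  | [] => ∅
  | [G] => lgB G
  | _ :: G :: l => lgDest (G :: l)

/-- Destination, with a default value for the empty linked graph. -/
def lgDestD (S : Set Q) : List (Set (Q × Q)) → Set Q
  | [] => S
  | l => lgDest l

/-- Compaction of a linked graph, as a relation on `Q`. -/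
def compRel : List (Set (Q × Q)) → Set (Q × Q)
  | [] => {p | p.1 = p.2}
  | [G] => G
  | G :: H :: l => {p | ∃ t, (p.1, t) ∈ G ∧ (t, p.2) ∈ compRel (H :: l)}

/-- Reachability in a graph given as a set of edges. -/
def grReach (C : Set (Q × Q)) (s t : Q) : Prop :=
  Relation.ReflTransGen (fun a b => (a, b) ∈ C) s t

/-- `Rec(I)` : the recurrent states of the compaction of a linked graph. -/
def recSet (l : List (Set (Q × Q))) : Set Q :=
  {s | s ∈ lgOrg l ∧ ∀ t, grReach (compRel l) s t → grReach (compRel l) t s}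

/-- `Rec(s,I)` : the recurrent states reachable from `s` in the compaction. -/
def recFrom (s : Q) (l : List (Set (Q × Q))) : Set Q :=
  {t | t ∈ recSet l ∧ grReach (compRel l) s t}

/-- Restrict each graph of a linked graph to the sources reachable from `S`. -/
def restrictFrom (S : Set Q) : List (Set (Q × Q)) → List (Set (Q × Q))
  | [] => []
  | G :: l => ({p | p ∈ G ∧ p.1 ∈ S} : Set (Q × Q)) ::
      restrictFrom (lgB ({p | p ∈ G ∧ p.1 ∈ S} : Set (Q × Q))) l

/-- `(i₁,i₂)` (0-indexed) is a border of the linked graph `l`. -/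
def IsBorder (l : List (Set (Q × Q))) (i₁ i₂ : ℕ) : Prop :=
  i₁ < i₂ ∧ i₂ < l.length ∧ lgB (l.getD i₂ ∅) ⊆ lgA (l.getD i₁ ∅)

/-- The action of a border `(i₁,i₂)` (0-indexed) on a linked graph. -/
def borderAct (l : List (Set (Q × Q))) (i₁ i₂ : ℕ) : List (Set (Q × Q)) :=
  let p := i₁ - 1
  let seg := (l.drop i₁).take (i₂ + 1 - i₁)
  let pre := l.take p
  let S := lgDestD (lgOrg l) pre
  let Gspec : Set (Q × Q) := {pr | pr.1 ∈ S ∧ pr.2 ∈ recFrom pr.1 seg}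
  pre ++ Gspec :: restrictFrom (lgB Gspec) (l.drop (p + 1))

/-- Action of a chain of borders on a linked graph. -/
def borderChainAct : List (ℕ × ℕ) → List (Set (Q × Q)) → List (Set (Q × Q))
  | [], l => l
  | b :: bs, l => borderChainAct bs (borderAct l b.1 b.2)

/-- `B` is a chain of borders on the linked graph `l`. -/
def IsBorderChain : List (ℕ × ℕ) → List (Set (Q × Q)) → Prop
  | [], _ => True
  | b :: bs, l => IsBorder l b.1 b.2 ∧ IsBorderChain bs (borderAct l b.1 b.2)

/-- `LG(ρ, S, T)` : the linked graph induced by reading `ρ` from `S`. -/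
def lgOf (T : FPT Q A) (S : Set Q) : List A → List (Set (Q × Q))
  | [] => []
  | a :: ρ => ({p | p.1 ∈ S ∧ 0 < T.M a p.1 p.2} : Set (Q × Q)) ::
      lgOf T (lgB ({p | p.1 ∈ S ∧ 0 < T.M a p.1 p.2} : Set (Q × Q))) ρ

/-- `C →^{#-ρ} D`. -/
def HashRho (T : FPT Q A) (ρ : List A) (C D : Set Q) : Prop :=
  ∃ B : List (ℕ × ℕ), IsBorderChain B (lgOf T C ρ) ∧
    lgDestD C (borderChainAct B (lgOf T C ρ)) = D

/-- `C →^{#} D`. -/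
def Hash (T : FPT Q A) (C D : Set Q) : Prop := ∃ ρ : List A, HashRho T ρ C D

/-- Structurally simple probabilistic automaton. -/
def StructSimple (T : FPT Q A) : Prop :=
  ∀ (ρ : List A) (C D : Set Q),
    D ⊆ C → HashRho T ρ C D →
    (∀ D' : Set Q, HashRho T ρ C D' → D' ⊆ D → D' = D) →
    ChainRecFin T (unif D) ρ

/-- `C →^{#-ρ-I} D`. -/
def HashIRho (T : FPT Q A) (ρ : List A) (C : Set Q) (I : Set (Q × Q)) (D : Set Q) : Prop :=
  ∃ B : List (ℕ × ℕ), IsBorderChain B (lgOf T C ρ) ∧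
    ∃ i : ℕ, 1 ≤ i ∧ i ≤ ρ.length ∧
      compRel ((borderChainAct B (lgOf T C ρ)).take i) = I ∧
      lgDest ((borderChainAct B (lgOf T C ρ)).take i) = D

/-- Edge of the extended support graph. -/
def ESGEdge (T : FPT Q A) (C D : Set Q) : Prop :=
  ∃ (I : Set (Q × Q)) (ρ : List A), HashIRho T ρ C I D

/-- Reachability in the extended support graph. -/
def ESGReach (T : FPT Q A) : Set Q → Set Q → Prop :=
  Relation.ReflTransGen (ESGEdge T)

/-- A subsequence of recurrent execution trees of the execution tree `(β, w)`. -/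
structure RecSeqOf (T : FPT Q A) (β : Q → ℝ) (w : ℕ → A) where
  k : ℕ
  βs : Fin (k + 1) → Q → ℝ
  ρs : Fin k → List A
  ρ's : Fin k → List A
  wlast : ℕ → A
  dists : ∀ i, IsDist (βs i)
  first_eq : βs 0 = β
  supp_sub : ∀ i : Fin k,
    supp (βs i.succ) ⊆ supp (delta T (βs i.castSucc) (ρs i ++ ρ's i))
  chainrec : ∀ i : Fin k, ChainRecFin T (βs i.castSucc) (ρs i)
  chainrec_last : ChainRecInf T (βs (Fin.last k)) wlast
  decomp_prefix : PrefixOf ((List.ofFn fun i : Fin k => ρs i ++ ρ's i).flatten) w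
  decomp_tail : ∀ n : ℕ,
    w (((List.ofFn fun i : Fin k => ρs i ++ ρ's i).flatten).length + n) = wlast n

/-- The length of a sequence of recurrent execution trees. -/
def RecSeqOf.len {T : FPT Q A} {β : Q → ℝ} {w : ℕ → A} (r : RecSeqOf T β w) : ℕ :=
  ∑ i, (r.ρ's i).length

/-- `w` is a lasso shape word `ρ₁ · ρ₂^ω` with `ρ₂` nonempty. -/
def IsLasso (w : ℕ → A) : Prop :=
  ∃ ρ₁ ρ₂ : List A, ρ₂ ≠ [] ∧
    (∀ n : ℕ, n < ρ₁.length → ρ₁[n]? = some (w n)) ∧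
    (∀ n : ℕ, ρ₁.length ≤ n → ρ₂[(n - ρ₁.length) % ρ₂.length]? = some (w n))

/-- The periodic word `ρ^ω`. -/
def periodicWord (ρ : List A) (h : ρ ≠ []) : ℕ → A :=
  fun n => ρ.get ⟨n % ρ.length, Nat.mod_lt n (List.length_pos_iff.mpr h)⟩

/-- States visited infinitely often by a run. -/
def infOcc (r : ℕ → Q) : Set Q := {q | ∀ N : ℕ, ∃ n, N ≤ n ∧ r n = q}

/-- The parity acceptance condition for a priority function `p`. -/
def parityEvent (p : Q → ℕ) : Set (ℕ → Q) := {r | Even (sInf (p '' infOcc r))}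

/-! ### The induced measure on runs -/

/-- Probability of a cylinder of length `n+1` for the chain started in `β` reading `w`. -/
def cylProb (T : FPT Q A) (β : Q → ℝ) (w : ℕ → A) (n : ℕ) (f : Fin (n + 1) → Q) : ℝ :=
  β (f 0) * ∏ i : Fin n, T.M (w i) (f i.castSucc) (f i.succ)

/-- `μ` is the probability measure `P^w` induced on runs by the chain started
in `β` reading `w`. -/
def IsMarkovMeasure [MeasurableSpace Q] (T : FPT Q A) (β : Q → ℝ) (w : ℕ → A)
    (μ : Measure (ℕ → Q)) : Prop :=
  IsProbabilityMeasure μ ∧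
    ∀ (n : ℕ) (f : Fin (n + 1) → Q),
      μ {r | ∀ i : Fin (n + 1), r i = f i} = ENNReal.ofReal (cylProb T β w n f)

/-- `F_n` : the σ-field generated by the coordinates `X_m`, `m ≥ n`. -/
def futureField (Q : Type*) [m : MeasurableSpace Q] (n : ℕ) : MeasurableSpace (ℕ → Q) :=
  ⨆ k, ⨆ _ : n ≤ k, MeasurableSpace.comap (fun r : ℕ → Q => r k) m

/-- `F_∞` : the tail σ-field. -/
def tailField (Q : Type*) [MeasurableSpace Q] : MeasurableSpace (ℕ → Q) :=
  ⨅ n : ℕ, futureField Q n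

/-- `Γ` is an atomic event of the σ-field `m` for the measure `μ`. -/
def IsAtomIn {Q : Type*} [MeasurableSpace Q] (μ : Measure (ℕ → Q))
    (m : MeasurableSpace (ℕ → Q)) (Γ : Set (ℕ → Q)) : Prop :=
  0 < μ Γ ∧ ∀ Γ' : Set (ℕ → Q), MeasurableSet[m] Γ' → Γ' ⊆ Γ → μ Γ' = 0 ∨ μ Γ' = μ Γ

/-- `τ^i_∞` : runs that eventually stay in the jet `J^i`. -/
def tauInf {Q : Type*} {c : ℕ} (J : Fin (c + 1) → ℕ → Set Q) (i : Fin (c + 1)) :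
    Set (ℕ → Q) :=
  {r | ∃ N : ℕ, ∀ n, N ≤ n → r n ∈ J i n}

/-- `(J^0,...,J^c)` is a partition of `Q^ω` into jets. -/
def JetPartition {Q : Type*} {c : ℕ} (J : Fin (c + 1) → ℕ → Set Q) : Prop :=
  ∀ (n : ℕ) (q : Q), ∃! i : Fin (c + 1), q ∈ J i n

/-- Absorption: almost every run eventually enters one of the jets `J^i`, `i ≥ 1`,
and stays there forever. -/
def Absorbing {Q : Type*} [MeasurableSpace Q] {c : ℕ} (μ : Measure (ℕ → Q))
    (J : Fin (c + 1) → ℕ → Set Q) : Prop :=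
  μ {r | ∃ i : Fin (c + 1), i ≠ 0 ∧ ∃ N : ℕ, ∀ n, N ≤ n → r n ∈ J i n} = 1

/-- Conditional probability `μ(E | F)`. -/
noncomputable def condProb {Q : Type*} [MeasurableSpace Q] (μ : Measure (ℕ → Q))
    (E F : Set (ℕ → Q)) : ℝ :=
  (μ (E ∩ F)).toReal / (μ F).toReal

/-- The jet `J` is mixing for the measure `μ`. -/
def MixingJet {Q : Type*} [MeasurableSpace Q] (μ : Measure (ℕ → Q)) (J : ℕ → Set Q) :
    Prop :=
  ∀ q q' : Q, ∀ qs : ℕ → Q, (∀ n, qs n ∈ J n) → ∀ m : ℕ,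
    (∃ L : ℝ, 0 < L ∧
      Tendsto (fun n => condProb μ {r | r n = qs n} {r | r m = q}) atTop (𝓝 L)) →
    (∃ L : ℝ, 0 < L ∧
      Tendsto (fun n => condProb μ {r | r n = qs n} {r | r m = q'}) atTop (𝓝 L)) →
    Tendsto (fun n =>
        condProb μ {r | r n = qs n} ({r | r n ∈ J n} ∩ {r | r m = q}) /
        condProb μ {r | r n = qs n} ({r | r n ∈ J n} ∩ {r | r m = q'}))
      atTop (𝓝 1)

end PAut

/-!
After a finite prefix a lasso word is periodic. By pigeonhole on supports there is a multiple
`D = d·p` of a period `p` such that reading `2d` blocks of length `p` connects the same pairs of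
states as reading `d` blocks, so the matrix `C` of one block of length `D` has a transitive
support. For such a stochastic matrix every state reaches a recurrent state in one step, so the
mass on transient states decays geometrically, and inside each recurrent class all transitions
are at least the smallest positive entry of `C`. Doeblin's contraction, perturbed by the
summable inflow into the class, then makes the increments of `μ C^k` summable. Hence the
process converges along every residue class modulo `D`: states with a positive limit keep mass
above half the smallest positive limit, the other states carry vanishing mass.
-/

namespace PAut

open scoped Matrix

theorem exists_pos_le_of_pos {ι : Type*} [Finite ι] (f : ι → ℝ) :
    ∃ δ > 0, ∀ i, 0 < f i → δ ≤ f i := by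
  rcases isEmpty_or_nonempty ι with hι | hι
  · exact ⟨1, one_pos, fun i => isEmptyElim i⟩
  obtain ⟨i₀, hi₀⟩ := Finite.exists_min fun i => if 0 < f i then f i else 1
  refine ⟨_, ?_, fun i hi => (hi₀ i).trans_eq (if_pos hi)⟩
  split_ifs with h
  exacts [h, one_pos]

theorem summable_of_le_mul_add {a b : ℕ → ℝ} {r : ℝ} (ha : ∀ k, 0 ≤ a k) (hr : r < 1)
    (hb0 : ∀ k, 0 ≤ b k) (hb : Summable b) (h : ∀ k, a (k + 1) ≤ r * a k + b k) :
    Summable a := by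
  set s := max r 0
  have hs0 : 0 ≤ s := le_max_right _ _
  have hs1 : s < 1 := max_lt hr one_pos
  have hB : ∀ n, ∑ k ∈ Finset.range n, b k ≤ ∑' k, b k := fun n =>
    hb.sum_le_tsum _ fun k _ => hb0 k
  refine summable_of_sum_range_le ha (c := (a 0 + ∑' k, b k) / (1 - s)) fun n => ?_
  rw [le_div_iff₀ (by linarith)]
  cases n with
  | zero => simpa using add_nonneg (ha 0) (tsum_nonneg hb0)
  | succ n =>
    have hstep : ∑ k ∈ Finset.range n, a (k + 1) ≤
        s * ∑ k ∈ Finset.range n, a k + ∑ k ∈ Finset.range n, b k := by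
      rw [Finset.mul_sum, ← Finset.sum_add_distrib]
      exact Finset.sum_le_sum fun k _ =>
        (h k).trans (by gcongr; exacts [ha k, le_max_left _ _])
    have hmono : ∑ k ∈ Finset.range n, a k ≤ ∑ k ∈ Finset.range (n + 1), a k :=
      Finset.sum_le_sum_of_subset_of_nonneg (by simp) fun k _ _ => ha k
    rw [Finset.sum_range_succ'] at hmono ⊢
    nlinarith [hB n]

section Markov

variable {Q : Type*}

def IsRecurrent (C : Matrix Q Q ℝ) (i : Q) : Prop := ∀ j, 0 < C i j → 0 < C j i

theorem IsRecurrent.of_pos {C : Matrix Q Q ℝ}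
    (htrans : ∀ i j k, 0 < C i j → 0 < C j k → 0 < C i k) {i j : Q}
    (hi : IsRecurrent C i) (hij : 0 < C i j) : IsRecurrent C j := fun k hjk =>
  htrans _ _ _ (hi k (htrans _ _ _ hij hjk)) hij

theorem exists_pos_of_sum_eq_one [Fintype Q] {C : Matrix Q Q ℝ} (hC1 : ∀ i, ∑ j, C i j = 1)
    (i : Q) : ∃ j, 0 < C i j := by
  by_contra! h
  linarith [hC1 i, Finset.sum_nonpos fun j (_ : j ∈ Finset.univ) => h j]

theorem exists_pos_isRecurrent [Fintype Q] {C : Matrix Q Q ℝ} (hC1 : ∀ i, ∑ j, C i j = 1)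
    (htrans : ∀ i j k, 0 < C i j → 0 < C j k → 0 < C i k) (i : Q) :
    ∃ j, 0 < C i j ∧ IsRecurrent C j := by
  classical
  let succ : Q → Finset Q := fun j => Finset.univ.filter (0 < C j ·)
  have mem_succ : ∀ j k, k ∈ succ j ↔ 0 < C j k := by simp [succ]
  have succ_nonempty : ∀ j, (succ j).Nonempty := fun j =>
    (exists_pos_of_sum_eq_one hC1 j).imp fun k hk => (mem_succ j k).2 hk
  -- Successor sets shrink along edges, so below a successor `z` of `i` with a smallest
  -- successor set they are all equal, which makes every successor of `z` recurrent.
  obtain ⟨z, hiz, hmin⟩ :=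
    (succ i).exists_min_image (fun j => (succ j).card) (succ_nonempty i)
  rw [mem_succ] at hiz
  have succ_eq : ∀ j ∈ succ z, succ j = succ z := fun j hj =>
    Finset.eq_of_subset_of_card_le
      (fun k hk => (mem_succ z k).2 (htrans _ _ _ ((mem_succ z j).1 hj) ((mem_succ j k).1 hk)))
      (hmin j ((mem_succ i j).2 (htrans _ _ _ hiz ((mem_succ z j).1 hj))))
  obtain ⟨x, hx⟩ := succ_nonempty z
  refine ⟨x, htrans _ _ _ hiz ((mem_succ z x).1 hx), fun y hxy => ?_⟩
  have hy : y ∈ succ z := succ_eq x hx ▸ (mem_succ x y).2 hxy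
  rw [← mem_succ, succ_eq y hy]
  exact hx

theorem sum_compl_vecMul_le [Fintype Q] [DecidableEq Q] {C : Matrix Q Q ℝ}
    (hC1 : ∀ i, ∑ j, C i j = 1) {R : Finset Q} {δ : ℝ} (hR : ∀ i ∈ R, ∀ j ∉ R, C i j = 0)
    (hesc : ∀ i ∉ R, δ ≤ ∑ j ∈ R, C i j) {u : Q → ℝ} (hu : ∀ i, 0 ≤ u i) :
    ∑ j ∈ Rᶜ, (u ᵥ* C) j ≤ (1 - δ) * ∑ i ∈ Rᶜ, u i := by
  have hout : ∀ i, ∑ j ∈ Rᶜ, C i j = 1 - ∑ j ∈ R, C i j := fun i => by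
    rw [← hC1 i, ← Finset.sum_add_sum_compl R]; ring
  calc ∑ j ∈ Rᶜ, (u ᵥ* C) j = ∑ i, u i * ∑ j ∈ Rᶜ, C i j := by
        simp only [Matrix.vecMul, dotProduct, Finset.mul_sum]
        exact Finset.sum_comm
    _ = ∑ i ∈ Rᶜ, u i * ∑ j ∈ Rᶜ, C i j := by
        refine (Finset.sum_subset (Finset.subset_univ _) fun i _ hi => ?_).symm
        rw [Finset.mem_compl, not_not] at hi
        rw [Finset.sum_eq_zero fun j hj => hR i hi j (Finset.mem_compl.1 hj), mul_zero]
    _ ≤ ∑ i ∈ Rᶜ, u i * (1 - δ) := Finset.sum_le_sum fun i hi => by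
        rw [hout]
        exact mul_le_mul_of_nonneg_left (by linarith [hesc i (Finset.mem_compl.1 hi)]) (hu i)
    _ = (1 - δ) * ∑ i ∈ Rᶜ, u i := by rw [← Finset.sum_mul, mul_comm]

theorem sum_abs_sum_mul_le {C : Matrix Q Q ℝ} {S : Finset Q} {δ : ℝ} (hδ0 : 0 ≤ δ)
    (hS1 : ∀ i ∈ S, ∑ j ∈ S, C i j = 1) (hδ : ∀ i ∈ S, ∀ j ∈ S, δ ≤ C i j) (e : Q → ℝ) :
    ∑ j ∈ S, |∑ i ∈ S, e i * C i j| ≤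
      (1 - S.card * δ) * ∑ i ∈ S, |e i| + S.card * δ * |∑ i ∈ S, e i| := by
  have hsplit : ∀ j ∈ S, |∑ i ∈ S, e i * C i j| ≤
      ∑ i ∈ S, |e i| * (C i j - δ) + δ * |∑ i ∈ S, e i| := fun j hj => by
    have : ∑ i ∈ S, e i * C i j = ∑ i ∈ S, e i * (C i j - δ) + δ * ∑ i ∈ S, e i := by
      rw [Finset.mul_sum, ← Finset.sum_add_distrib]
      exact Finset.sum_congr rfl fun i _ => by ring
    rw [this]
    refine (abs_add_le _ _).trans (add_le_add ((Finset.abs_sum_le_sum_abs _ _).trans_eq ?_) ?_)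
    · refine Finset.sum_congr rfl fun i hi => ?_
      rw [abs_mul, abs_of_nonneg (sub_nonneg.2 (hδ i hi j hj))]
    · rw [abs_mul, abs_of_nonneg hδ0]
  calc ∑ j ∈ S, |∑ i ∈ S, e i * C i j|
      ≤ ∑ j ∈ S, (∑ i ∈ S, |e i| * (C i j - δ) + δ * |∑ i ∈ S, e i|) :=
        Finset.sum_le_sum hsplit
    _ = ∑ i ∈ S, |e i| * (1 - S.card * δ) + S.card * δ * |∑ i ∈ S, e i| := by
        rw [Finset.sum_add_distrib, Finset.sum_comm, Finset.sum_const, nsmul_eq_mul, mul_assoc]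
        congr 1
        refine Finset.sum_congr rfl fun i hi => ?_
        rw [← Finset.mul_sum, Finset.sum_sub_distrib, hS1 i hi, Finset.sum_const, nsmul_eq_mul]
    _ = _ := by rw [← Finset.sum_mul, mul_comm]

theorem summable_sum_abs_sub_of_closed [Fintype Q] [DecidableEq Q] {C : Matrix Q Q ℝ}
    (hC0 : ∀ i j, 0 ≤ C i j) {S : Finset Q} (hS : S.Nonempty) {δ : ℝ} (hδ0 : 0 < δ)
    (hS1 : ∀ i ∈ S, ∑ j ∈ S, C i j = 1) (hδ : ∀ i ∈ S, ∀ j ∈ S, δ ≤ C i j)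
    {u : ℕ → Q → ℝ} (hu0 : ∀ k i, 0 ≤ u k i) (hu : ∀ k, u (k + 1) = u k ᵥ* C)
    (hin : Summable fun k => ∑ j ∈ S, ∑ i ∈ Sᶜ, u k i * C i j) :
    Summable fun k => ∑ j ∈ S, |u (k + 1) j - u k j| := by
  set g : ℕ → Q → ℝ := fun k j => ∑ i ∈ Sᶜ, u k i * C i j
  set σ : ℕ → ℝ := fun k => ∑ j ∈ S, g k j
  set γ : ℝ := S.card * δ
  have hγ : 0 < γ := mul_pos (by exact_mod_cast Finset.card_pos.2 hS) hδ0
  have hg0 : ∀ k j, 0 ≤ g k j := fun k j =>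
    Finset.sum_nonneg fun i _ => mul_nonneg (hu0 k i) (hC0 i j)
  have hσ0 : ∀ k, 0 ≤ σ k := fun k => Finset.sum_nonneg fun j _ => hg0 k j
  have hstep : ∀ k j, u (k + 1) j = ∑ i ∈ S, u k i * C i j + g k j := fun k j => by
    rw [hu]; exact (Finset.sum_add_sum_compl S _).symm
  set d : ℕ → Q → ℝ := fun k j => u (k + 1) j - u k j
  have hd_sum : ∀ k, ∑ j ∈ S, d k j = σ k := fun k => by
    simp only [d, hstep, Finset.sum_sub_distrib, Finset.sum_add_distrib]
    rw [Finset.sum_comm]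
    simp only [← Finset.mul_sum]
    rw [Finset.sum_congr rfl fun i hi => by rw [hS1 i hi, mul_one]]
    ring
  have hd_step : ∀ k j, d (k + 1) j = ∑ i ∈ S, d k i * C i j + (g (k + 1) j - g k j) :=
    fun k j => by
      simp only [d]
      rw [hstep (k + 1) j, hstep k j]
      simp only [sub_mul, Finset.sum_sub_distrib]
      ring
  set D : ℕ → ℝ := fun k => ∑ j ∈ S, |d k j|
  have hD : ∀ k, D (k + 1) ≤ (1 - γ) * D k + (γ * σ k + (σ (k + 1) + σ k)) := fun k => by
    calc D (k + 1) ≤ ∑ j ∈ S, (|∑ i ∈ S, d k i * C i j| + (g (k + 1) j + g k j)) :=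
          Finset.sum_le_sum fun j _ => by
            rw [hd_step]
            refine (abs_add_le _ _).trans (add_le_add le_rfl ((abs_sub _ _).trans_eq ?_))
            rw [abs_of_nonneg (hg0 _ _), abs_of_nonneg (hg0 _ _)]
      _ ≤ (1 - γ) * D k + γ * |∑ i ∈ S, d k i| + (σ (k + 1) + σ k) := by
          rw [Finset.sum_add_distrib, Finset.sum_add_distrib]
          linarith [sum_abs_sum_mul_le hδ0.le hS1 hδ (d k)]
      _ = _ := by rw [hd_sum, abs_of_nonneg (hσ0 k)]; ring
  exact summable_of_le_mul_add (fun k => Finset.sum_nonneg fun _ _ => abs_nonneg _)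
    (by linarith : 1 - γ < 1)
    (fun k => add_nonneg (mul_nonneg hγ.le (hσ0 k)) (add_nonneg (hσ0 _) (hσ0 k)))
    ((hin.mul_left γ).add (((summable_nat_add_iff 1).2 hin).add hin)) hD

theorem exists_tendsto_of_closed [Fintype Q] [DecidableEq Q] {C : Matrix Q Q ℝ}
    (hC0 : ∀ i j, 0 ≤ C i j) {S : Finset Q} {δ : ℝ} (hδ0 : 0 < δ)
    (hS1 : ∀ i ∈ S, ∑ j ∈ S, C i j = 1) (hδ : ∀ i ∈ S, ∀ j ∈ S, δ ≤ C i j)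
    {u : ℕ → Q → ℝ} (hu0 : ∀ k i, 0 ≤ u k i) (hu : ∀ k, u (k + 1) = u k ᵥ* C)
    (hin : Summable fun k => ∑ j ∈ S, ∑ i ∈ Sᶜ, u k i * C i j) {j : Q} (hj : j ∈ S) :
    ∃ L, Tendsto (fun k => u k j) atTop (𝓝 L) := by
  refine cauchySeq_tendsto_of_complete (cauchySeq_of_dist_le_of_summable _ (fun k => ?_)
    (summable_sum_abs_sub_of_closed hC0 ⟨j, hj⟩ hδ0 hS1 hδ hu0 hu hin))
  rw [Real.dist_eq, abs_sub_comm]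
  exact Finset.single_le_sum (f := fun j => |u (k + 1) j - u k j|) (fun _ _ => abs_nonneg _) hj


open Classical in
theorem summable_sum_compl_isRecurrent [Fintype Q] [DecidableEq Q] {C : Matrix Q Q ℝ}
    (hC0 : ∀ i j, 0 ≤ C i j) (hC1 : ∀ i, ∑ j, C i j = 1)
    (htrans : ∀ i j k, 0 < C i j → 0 < C j k → 0 < C i k)
    {u : ℕ → Q → ℝ} (hu0 : ∀ k i, 0 ≤ u k i) (hu : ∀ k, u (k + 1) = u k ᵥ* C) :
    Summable fun k => ∑ i ∈ (Finset.univ.filter (IsRecurrent C))ᶜ, u k i := by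
  obtain ⟨δ, hδ0, hδ⟩ := exists_pos_le_of_pos fun p : Q × Q => C p.1 p.2
  set R := Finset.univ.filter (IsRecurrent C)
  have mem_R : ∀ i, i ∈ R ↔ IsRecurrent C i := by simp [R]
  have hR : ∀ i ∈ R, ∀ l ∉ R, C i l = 0 := fun i hi l hl => by
    by_contra h
    exact hl ((mem_R l).2 (((mem_R i).1 hi).of_pos htrans ((hC0 i l).lt_of_ne' h)))
  have hesc : ∀ i ∉ R, δ ≤ ∑ l ∈ R, C i l := fun i _ => by
    obtain ⟨z, hiz, hz⟩ := exists_pos_isRecurrent hC1 htrans i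
    exact (hδ (i, z) hiz).trans (Finset.single_le_sum (fun l _ => hC0 i l) ((mem_R z).2 hz))
  exact summable_of_le_mul_add (fun k => Finset.sum_nonneg fun i _ => hu0 k i)
    (by linarith : 1 - δ < 1) (fun _ => le_rfl) summable_zero
    fun k => by simpa [hu] using sum_compl_vecMul_le hC1 hR hesc (hu0 k)

open Classical in
theorem exists_tendsto_of_isRecurrent [Fintype Q] [DecidableEq Q] {C : Matrix Q Q ℝ}
    (hC0 : ∀ i j, 0 ≤ C i j) (hC1 : ∀ i, ∑ j, C i j = 1)
    (htrans : ∀ i j k, 0 < C i j → 0 < C j k → 0 < C i k)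
    {u : ℕ → Q → ℝ} (hu0 : ∀ k i, 0 ≤ u k i) (hu : ∀ k, u (k + 1) = u k ᵥ* C)
    (ht : Summable fun k => ∑ i ∈ (Finset.univ.filter (IsRecurrent C))ᶜ, u k i)
    {j : Q} (hj : IsRecurrent C j) :
    ∃ L, Tendsto (fun k => u k j) atTop (𝓝 L) := by
  obtain ⟨δ, hδ0, hδ⟩ := exists_pos_le_of_pos fun p : Q × Q => C p.1 p.2
  have hpos : ∀ i l, C i l ≠ 0 → 0 < C i l := fun i l h => (hC0 i l).lt_of_ne' h
  set S := Finset.univ.filter (0 < C j ·)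
  have mem_S : ∀ i, i ∈ S ↔ 0 < C j i := by simp [S]
  have hS_pos : ∀ i ∈ S, ∀ l ∈ S, 0 < C i l := fun i hi l hl =>
    htrans _ _ _ (hj i ((mem_S i).1 hi)) ((mem_S l).1 hl)
  have hS1 : ∀ i ∈ S, ∑ l ∈ S, C i l = 1 := fun i hi => by
    rw [← hC1 i]
    refine Finset.sum_subset (Finset.subset_univ _) fun l _ hl => ?_
    by_contra h
    exact hl ((mem_S l).2 (htrans _ _ _ ((mem_S i).1 hi) (hpos i l h)))
  have hRS : ∀ i, IsRecurrent C i → i ∉ S → ∑ l ∈ S, C i l = 0 := fun i hi hiS =>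
    Finset.sum_eq_zero fun l hl => by
      by_contra h
      exact hiS ((mem_S i).2 (htrans _ _ _ ((mem_S l).1 hl) (hi l (hpos i l h))))
  have hin : ∀ k, ∑ l ∈ S, ∑ i ∈ Sᶜ, u k i * C i l ≤
      ∑ i ∈ (Finset.univ.filter (IsRecurrent C))ᶜ, u k i := fun k => by
    rw [Finset.sum_comm]
    simp only [← Finset.mul_sum]
    rw [← Finset.sum_subset (s₁ := (Finset.univ.filter (IsRecurrent C))ᶜ) ?_ ?_]
    · refine Finset.sum_le_sum fun i _ => mul_le_of_le_one_right (hu0 k i) ?_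
      exact (Finset.sum_le_sum_of_subset_of_nonneg (Finset.subset_univ _)
        fun l _ _ => hC0 i l).trans_eq (hC1 i)
    · intro i hi
      simp only [Finset.mem_compl, Finset.mem_filter, Finset.mem_univ, true_and] at hi ⊢
      exact fun hiS => hi (hj.of_pos htrans ((mem_S i).1 hiS))
    · intro i hiS hiR
      rw [hRS i (by simpa using hiR) (Finset.mem_compl.1 hiS), mul_zero]
  obtain ⟨x, hx⟩ := exists_pos_of_sum_eq_one hC1 j
  refine exists_tendsto_of_closed hC0 hδ0 hS1
    (fun i hi l hl => hδ (i, l) (hS_pos i hi l hl)) hu0 hu ?_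
    ((mem_S j).2 (htrans _ _ _ hx (hj x hx)))
  exact ht.of_nonneg_of_le (fun k => Finset.sum_nonneg fun l _ =>
    Finset.sum_nonneg fun i _ => mul_nonneg (hu0 k i) (hC0 i l)) hin

theorem exists_tendsto_of_transitive [Fintype Q] [DecidableEq Q] {C : Matrix Q Q ℝ}
    (hC0 : ∀ i j, 0 ≤ C i j) (hC1 : ∀ i, ∑ j, C i j = 1)
    (htrans : ∀ i j k, 0 < C i j → 0 < C j k → 0 < C i k)
    {u : ℕ → Q → ℝ} (hu0 : ∀ k i, 0 ≤ u k i) (hu : ∀ k, u (k + 1) = u k ᵥ* C) (j : Q) :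
    ∃ L, Tendsto (fun k => u k j) atTop (𝓝 L) := by
  classical
  have ht := summable_sum_compl_isRecurrent hC0 hC1 htrans hu0 hu
  by_cases hj : IsRecurrent C j
  · exact exists_tendsto_of_isRecurrent hC0 hC1 htrans hu0 hu ht hj
  · refine ⟨0, squeeze_zero (fun k => hu0 k j) (fun k => ?_) ht.tendsto_atTop_zero⟩
    exact Finset.single_le_sum (fun i _ => hu0 k i) (by simpa using hj)

end Markov

theorem exists_iterate_two_mul_eq {α : Type*} [Finite α] (g : α → α) (x : α) :
    ∃ d, 0 < d ∧ g^[2 * d] x = g^[d] x := by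
  obtain ⟨a, b, hab, he⟩ := Finite.exists_ne_map_eq_of_infinite fun n => g^[n] x
  wlog hlt : a < b generalizing a b
  · exact this b a hab.symm he.symm (lt_of_le_of_ne (not_lt.1 hlt) hab.symm)
  have hper : Function.IsPeriodicPt g (b - a) (g^[a] x) := by
    show g^[b - a] (g^[a] x) = g^[a] x
    rw [← Function.iterate_add_apply, Nat.sub_add_cancel hlt.le]
    exact he.symm
  have hab : 0 < b - a := Nat.sub_pos_of_lt hlt
  set d := (a + 1) * (b - a)
  have had : a ≤ d := (Nat.le_succ a).trans (Nat.le_mul_of_pos_right _ hab)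
  have hy : g^[d] x = g^[d - a] (g^[a] x) := by
    rw [← Function.iterate_add_apply, Nat.sub_add_cancel had]
  refine ⟨d, Nat.mul_pos (Nat.succ_pos a) hab, ?_⟩
  rw [two_mul, Function.iterate_add_apply, hy]
  exact (hper.apply_iterate (d - a)).const_mul (a + 1)

theorem tendsto_of_tendsto_residues {α : Type*} [TopologicalSpace α] {f : ℕ → α} {l : α}
    {N D : ℕ} (hD : 0 < D) (h : ∀ r < D, Tendsto (fun k => f (N + k * D + r)) atTop (𝓝 l)) :
    Tendsto f atTop (𝓝 l) := by
  rw [← tendsto_add_atTop_iff_nat N, tendsto_atTop']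
  intro U hU
  have hev : ∀ᶠ k in atTop, ∀ r ∈ Finset.range D, f (N + k * D + r) ∈ U :=
    (Filter.eventually_all_finset _).2 fun r hr => (h r (Finset.mem_range.1 hr)).eventually_mem hU
  obtain ⟨K, hK⟩ := eventually_atTop.1 hev
  refine ⟨K * D, fun n hn => ?_⟩
  have e : N + n / D * D + n % D = n + N := by rw [add_assoc, Nat.div_add_mod', add_comm]
  simpa only [e] using hK (n / D) ((Nat.le_div_iff_mul_le hD).2 hn) (n % D)
    (Finset.mem_range.2 (Nat.mod_lt n hD))

theorem tendsto_ite_lt_zero {x : ℕ → ℝ} {ℓ c : ℝ} (hx0 : ∀ k, 0 ≤ x k)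
    (hx : Tendsto x atTop (𝓝 ℓ)) (hℓ : 0 < ℓ → c < ℓ) :
    Tendsto (fun k => if c < x k then 0 else x k) atTop (𝓝 0) := by
  rcases (ge_of_tendsto' hx hx0).lt_or_eq with hpos | hzero
  · exact tendsto_const_nhds.congr'
      ((hx.eventually (lt_mem_nhds (hℓ hpos))).mono fun k hk => (if_pos hk).symm)
  · refine squeeze_zero (fun k => ?_) (fun k => ?_) (hzero ▸ hx)
    · split_ifs
      exacts [le_rfl, hx0 k]
    · split_ifs
      exacts [hx0 k, le_rfl]

theorem simpleProcess_of_tendsto_residues {Q : Type*} [Fintype Q] [DecidableEq Q]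
    {μ : ℕ → Q → ℝ} (hμ : ∀ n q, 0 ≤ μ n q) {N D : ℕ} (hD : 0 < D) {ℓ : ℕ → Q → ℝ}
    (hℓ : ∀ r q, Tendsto (fun k => μ (N + k * D + r) q) atTop (𝓝 (ℓ r q))) :
    SimpleProcess μ := by
  obtain ⟨δ, hδ0, hδ⟩ := exists_pos_le_of_pos fun x : Fin D × Q => ℓ x.1 x.2
  refine ⟨δ / 2, half_pos hδ0, fun n => Finset.univ.filter (δ / 2 < μ n ·),
    fun n q hq => (Finset.mem_filter.1 hq).2, ?_⟩
  simp only [Finset.compl_filter, Finset.sum_filter, ite_not]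
  refine tendsto_of_tendsto_residues (N := N) hD fun r hr => ?_
  simpa using tendsto_finsetSum Finset.univ fun q _ => tendsto_ite_lt_zero (fun k => hμ _ q)
    (hℓ r q) fun h => (half_lt_self hδ0).trans_le (hδ (⟨r, hr⟩, q) h)

section Words

variable {Q A : Type*}

theorem wordPrefix_add (w : ℕ → A) (m n : ℕ) :
    wordPrefix w (m + n) = wordPrefix w m ++ wordPrefix (fun j => w (m + j)) n := by
  simp only [wordPrefix, List.range_add, List.map_append, List.map_map]
  rfl

theorem wordPrefix_mul_add_of_periodic {w : ℕ → A} {p : ℕ} (hw : Function.Periodic w p)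
    (k n : ℕ) : wordPrefix w (k * p + n) = wordPrefix w (k * p) ++ wordPrefix w n := by
  rw [wordPrefix_add]
  congr 2
  funext j
  rw [add_comm]
  simpa using hw.nat_mul k j

theorem IsLasso.exists_periodic {w : ℕ → A} (hw : IsLasso w) :
    ∃ N p, 0 < p ∧ Function.Periodic (fun j => w (N + j)) p := by
  obtain ⟨ρ₁, ρ₂, hρ₂, -, h₂⟩ := hw
  refine ⟨ρ₁.length, ρ₂.length, List.length_pos_iff.2 hρ₂, fun j => ?_⟩
  have h := h₂ (ρ₁.length + (j + ρ₂.length)) (by omega)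
  have h' := h₂ (ρ₁.length + j) (by omega)
  simp only [Nat.add_sub_cancel_left, Nat.add_mod_right] at h h'
  exact Option.some.inj (h.symm.trans h')

variable [Fintype Q] [DecidableEq Q]

theorem Mword_nonneg (T : FPT Q A) (ρ : List A) (q q' : Q) : 0 ≤ Mword T ρ q q' := by
  induction ρ generalizing q with
  | nil => simp only [Mword]; positivity
  | cons a ρ ih => exact Finset.sum_nonneg fun x _ => mul_nonneg (T.M_nonneg a q x) (ih x)

theorem Mword_row (T : FPT Q A) (ρ : List A) (q : Q) : ∑ q', Mword T ρ q q' = 1 := by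
  induction ρ generalizing q with
  | nil => simp [Mword]
  | cons a ρ ih =>
    simp only [Mword]
    rw [Finset.sum_comm]
    simp [← Finset.mul_sum, ih, T.M_row]

theorem Mword_append (T : FPT Q A) (ρ σ : List A) (q q' : Q) :
    Mword T (ρ ++ σ) q q' = ∑ x, Mword T ρ q x * Mword T σ x q' := by
  induction ρ generalizing q with
  | nil => simp [Mword]
  | cons a ρ ih =>
    simp only [List.cons_append, Mword, ih, Finset.mul_sum, Finset.sum_mul, mul_assoc]
    exact Finset.sum_comm

theorem Mword_append_pos_iff (T : FPT Q A) (ρ σ : List A) (q q' : Q) :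
    0 < Mword T (ρ ++ σ) q q' ↔ ∃ x, 0 < Mword T ρ q x ∧ 0 < Mword T σ x q' := by
  rw [Mword_append, Finset.sum_pos_iff_of_nonneg fun x _ =>
    mul_nonneg (Mword_nonneg T ρ q x) (Mword_nonneg T σ x q')]
  simp only [Finset.mem_univ, true_and]
  exact exists_congr fun x => ⟨fun h => (mul_pos_iff.1 h).resolve_right
    fun h' => (Mword_nonneg T ρ q x).not_gt h'.1, fun h => mul_pos h.1 h.2⟩

theorem delta_nonneg (T : FPT Q A) {β : Q → ℝ} (hβ : ∀ q, 0 ≤ β q) (ρ : List A) (q : Q) :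
    0 ≤ delta T β ρ q :=
  Finset.sum_nonneg fun x _ => mul_nonneg (hβ x) (Mword_nonneg T ρ x q)

theorem delta_append (T : FPT Q A) (β : Q → ℝ) (ρ σ : List A) :
    delta T β (ρ ++ σ) = delta T (delta T β ρ) σ := by
  funext q
  simp only [delta, Mword_append, Finset.mul_sum, Finset.sum_mul, mul_assoc]
  exact Finset.sum_comm

theorem tendsto_delta {ι : Type*} {l : Filter ι} (T : FPT Q A) {u : ι → Q → ℝ} {v : Q → ℝ}
    (hu : ∀ q, Tendsto (fun k => u k q) l (𝓝 (v q))) (ρ : List A) (q : Q) :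
    Tendsto (fun k => delta T (u k) ρ q) l (𝓝 (delta T v ρ q)) :=
  tendsto_finsetSum _ fun x _ => (hu x).mul_const _

theorem exists_period_transitive (T : FPT Q A) {w : ℕ → A} {p : ℕ} (hp : 0 < p)
    (hw : Function.Periodic w p) :
    ∃ D, 0 < D ∧ Function.Periodic w D ∧ ∀ i j k, 0 < Mword T (wordPrefix w D) i j →
      0 < Mword T (wordPrefix w D) j k → 0 < Mword T (wordPrefix w D) i k := by
  let supp : ℕ → Set (Q × Q) := fun n => {x | 0 < Mword T (wordPrefix w (n * p)) x.1 x.2}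
  let next : Set (Q × Q) → Set (Q × Q) := fun s =>
    {x | ∃ y, (x.1, y) ∈ s ∧ 0 < Mword T (wordPrefix w p) y x.2}
  have hsupp : ∀ n, supp n = next^[n] (supp 0) := by
    intro n
    induction n with
    | zero => rfl
    | succ n ih =>
      rw [Function.iterate_succ_apply', ← ih]
      ext x
      simp only [supp, next, Set.mem_ofPred_eq, add_mul, one_mul,
        wordPrefix_mul_add_of_periodic hw, Mword_append_pos_iff]
  obtain ⟨d, hd, hdd⟩ := exists_iterate_two_mul_eq next (supp 0)
  refine ⟨d * p, Nat.mul_pos hd hp, by simpa using hw.nat_mul d, fun i j k hij hjk => ?_⟩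
  have h2 : (i, k) ∈ supp (2 * d) := by
    show 0 < Mword T (wordPrefix w (2 * d * p)) i k
    rw [show 2 * d * p = d * p + d * p by ring, wordPrefix_mul_add_of_periodic hw,
      Mword_append_pos_iff]
    exact ⟨j, hij, hjk⟩
  rwa [hsupp, hdd, ← hsupp] at h2

end Words

theorem stmt9 {Q A : Type*} [Fintype Q] [DecidableEq Q]
    (T : FPT Q A) (β : Q → ℝ) (hβ : IsDist β)
    (w : ℕ → A) (hw : IsLasso w) :
    SimpleProcess (fun n => delta T β (wordPrefix w n)) := by
  obtain ⟨N, p, hp, hper⟩ := hw.exists_periodic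
  obtain ⟨D, hD, hperD, htrans⟩ := exists_period_transitive T hp hper
  set w' : ℕ → A := fun j => w (N + j)
  set u : ℕ → Q → ℝ := fun k => delta T (delta T β (wordPrefix w N)) (wordPrefix w' (k * D))
  have hu : ∀ k, u (k + 1) = u k ᵥ* Mword T (wordPrefix w' D) := fun k => by
    simp only [u, add_mul, one_mul, wordPrefix_mul_add_of_periodic hperD, delta_append]
    rfl
  have hu0 : ∀ k q, 0 ≤ u k q := fun k q => delta_nonneg T (delta_nonneg T hβ.1 _) _ q
  choose ℓ hℓ using exists_tendsto_of_transitive (Mword_nonneg T _) (Mword_row T _) htrans hu0 hu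
  refine simpleProcess_of_tendsto_residues (fun n q => delta_nonneg T hβ.1 _ q) hD
    (N := N) (ℓ := fun r => delta T ℓ (wordPrefix w' r)) fun r q => ?_
  have hμ : ∀ k, delta T β (wordPrefix w (N + k * D + r)) = delta T (u k) (wordPrefix w' r) :=
    fun k => by
      rw [add_assoc, wordPrefix_add, wordPrefix_mul_add_of_periodic hperD, delta_append,
        delta_append]
  simpa only [hμ] using tendsto_delta T hℓ (wordPrefix w' r) q

end PAut
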